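/- arXiv:2512.00897 — 6 statements merged into one kernel-verified Lean document; each statement's English description precedes it below -/
import Mathlib

section
/- The partial derivatives of V_S are given in closed form by ∂V_S/∂n0 (n0,n1) = σ⁴ / D(n0,n1)² and ∂V_S/∂n1 (n0,n1) = (n0 + σ² + 2·σ²·n0 + 1)² / D(n0,n1)² for all n0, n1 ≥ 0; in particular, both partial derivatives are strictly positive, so V_S is strictly increasing in each of its two arguments on [0,∞)×[0,∞). -/
/-- The denominator `D(n0,n1) = σ²(n0+n1+2 n0 n1) + (1+n0)(1+n1)`. -/
noncomputable def Dden (σ n0 n1 : ℝ) : ℝ :=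
  σ^2 * (n0 + n1 + 2*n0*n1) + (1+n0)*(1+n1)

/-- Forecaster value `V_L`. -/
noncomputable def VL (σ n0 n1 : ℝ) : ℝ :=
  σ^4 * (n0 + n1 + 2*n0*n1) / Dden σ n0 n1

/-- Nowcaster value `V_S`. -/
noncomputable def VS (σ n0 n1 : ℝ) : ℝ :=
  VL σ n0 n1 + (3*σ^2*n0*n1 + 2*σ^2*n1 + n1 + n0*n1) / Dden σ n0 n1

/-!
For fixed `n1`, `V_S` is a Möbius function `x ↦ (a x + b) / (c x + d)` of `n0`, and likewise
in `n1` for fixed `n0`. The derivative of such a function is `(a d - b c) / (c x + d)²`, and the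
two determinants `a d - b c` simplify to `σ⁴` and `(n0 + σ² + 2σ²n0 + 1)²` respectively. Both
are positive, and so is the denominator `D` on the closed quadrant; strict monotonicity then
follows from the mean value theorem.
-/

open Set

theorem hasDerivAt_affine_div_affine (a b c d x : ℝ) (hx : c * x + d ≠ 0) :
    HasDerivAt (fun x => (a * x + b) / (c * x + d)) ((a * d - b * c) / (c * x + d) ^ 2) x := by
  have hnum : HasDerivAt (fun x => a * x + b) a x := by
    simpa using ((hasDerivAt_id x).const_mul a).add_const b
  have hden : HasDerivAt (fun x => c * x + d) c x := by
    simpa using ((hasDerivAt_id x).const_mul c).add_const d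
  exact (hnum.div hden hx).congr_deriv (by ring)

theorem strictMonoOn_Ici_of_hasDerivAt_pos {f f' : ℝ → ℝ} {a : ℝ}
    (hf : ∀ x ∈ Ici a, HasDerivAt f (f' x) x) (hf' : ∀ x ∈ Ioi a, 0 < f' x) :
    StrictMonoOn f (Ici a) := by
  refine strictMonoOn_of_hasDerivWithinAt_pos (convex_Ici a)
    (fun x hx => (hf x hx).continuousAt.continuousWithinAt) (fun x hx => ?_) (by simpa using hf')
  rw [interior_Ici] at hx ⊢
  exact (hf x (mem_Ici_of_Ioi hx)).hasDerivWithinAt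

section

variable (σ : ℝ)

theorem Dden_pos {n0 n1 : ℝ} (hn0 : 0 ≤ n0) (hn1 : 0 ≤ n1) : 0 < Dden σ n0 n1 := by
  unfold Dden
  positivity

theorem VS_eq_div (n0 n1 : ℝ) : VS σ n0 n1 =
    (σ^4 * (n0 + n1 + 2*n0*n1) + (3*σ^2*n0*n1 + 2*σ^2*n1 + n1 + n0*n1)) / Dden σ n0 n1 := by
  rw [VS, VL, ← add_div]

theorem hasDerivAt_VS_left {n0 n1 : ℝ} (hD : Dden σ n0 n1 ≠ 0) :
    HasDerivAt (fun x => VS σ x n1) (σ^4 / (Dden σ n0 n1)^2) n0 := by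
  have hmob : (fun x => VS σ x n1) = fun x =>
      ((σ^4 * (1 + 2*n1) + 3*σ^2*n1 + n1) * x + (σ^4 + 2*σ^2 + 1) * n1) /
        ((σ^2 * (1 + 2*n1) + 1 + n1) * x + (σ^2 * n1 + 1 + n1)) := by
    funext x
    rw [VS_eq_div, Dden]
    congr 1 <;> ring
  have hDeq : Dden σ n0 n1 = (σ^2 * (1 + 2*n1) + 1 + n1) * n0 + (σ^2 * n1 + 1 + n1) := by
    rw [Dden]; ring
  rw [hDeq] at hD ⊢
  rw [hmob]
  exact (hasDerivAt_affine_div_affine _ _ _ _ n0 hD).congr_deriv (by ring)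

theorem hasDerivAt_VS_right {n0 n1 : ℝ} (hD : Dden σ n0 n1 ≠ 0) :
    HasDerivAt (fun y => VS σ n0 y)
      ((n0 + σ^2 + 2*σ^2*n0 + 1)^2 / (Dden σ n0 n1)^2) n1 := by
  have hmob : (fun y => VS σ n0 y) = fun y =>
      ((σ^4 * (1 + 2*n0) + 3*σ^2*n0 + 2*σ^2 + 1 + n0) * y + σ^4 * n0) /
        ((σ^2 * (1 + 2*n0) + 1 + n0) * y + (σ^2 * n0 + 1 + n0)) := by
    funext y
    rw [VS_eq_div, Dden]
    congr 1 <;> ring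
  have hDeq : Dden σ n0 n1 = (σ^2 * (1 + 2*n0) + 1 + n0) * n1 + (σ^2 * n0 + 1 + n0) := by
    rw [Dden]; ring
  rw [hDeq] at hD ⊢
  rw [hmob]
  exact (hasDerivAt_affine_div_affine _ _ _ _ n1 hD).congr_deriv (by ring)

end

/-- Closed-form partial derivatives of `V_S`, their positivity, and strict
monotonicity of `V_S` in each argument on `[0,∞)×[0,∞)`. -/
theorem stmt1 (σ : ℝ) (hσ : 0 < σ) :
    (∀ n0 n1 : ℝ, 0 ≤ n0 → 0 ≤ n1 →
      HasDerivAt (fun x => VS σ x n1) (σ^4 / (Dden σ n0 n1)^2) n0 ∧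
      HasDerivAt (fun y => VS σ n0 y) ((n0 + σ^2 + 2*σ^2*n0 + 1)^2 / (Dden σ n0 n1)^2) n1 ∧
      0 < σ^4 / (Dden σ n0 n1)^2 ∧
      0 < (n0 + σ^2 + 2*σ^2*n0 + 1)^2 / (Dden σ n0 n1)^2) ∧
    (∀ n1 : ℝ, 0 ≤ n1 → StrictMonoOn (fun x => VS σ x n1) (Set.Ici 0)) ∧
    (∀ n0 : ℝ, 0 ≤ n0 → StrictMonoOn (fun y => VS σ n0 y) (Set.Ici 0)) := by
  refine ⟨fun n0 n1 hn0 hn1 => ?_, fun n1 hn1 => ?_, fun n0 hn0 => ?_⟩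
  · have hD := Dden_pos σ hn0 hn1
    exact ⟨hasDerivAt_VS_left σ hD.ne', hasDerivAt_VS_right σ hD.ne', by positivity,
      by positivity⟩
  · refine strictMonoOn_Ici_of_hasDerivAt_pos
      (fun x hx => hasDerivAt_VS_left σ (Dden_pos σ hx hn1).ne') (fun x hx => ?_)
    have hD := Dden_pos σ (le_of_lt hx) hn1
    positivity
  · refine strictMonoOn_Ici_of_hasDerivAt_pos
      (fun y hy => hasDerivAt_VS_right σ (Dden_pos σ hn0 hy).ne') (fun y hy => ?_)
    have hD := Dden_pos σ hn0 (le_of_lt hy)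
    positivity
end

section
/- The function V_L is strictly concave on the convex set [0,∞) × [0,∞) ⊆ ℝ²: for all distinct points (n0,n1), (m0,m1) in [0,∞)×[0,∞) and all t ∈ (0,1), V_L(t·n0 + (1−t)·m0, t·n1 + (1−t)·m1) > t·V_L(n0,n1) + (1−t)·V_L(m0,m1). -/
/-!
With `q x = x / (1 + x)` one has `V_L(n0, n1) = σ² - (σ⁻² + q n0 + q n1)⁻¹`. The function `q` is
strictly concave on `[0, ∞)`, so `σ⁻² + q n0 + q n1` is a positive strictly concave function on the
quadrant, and the reciprocal of a positive strictly concave function is strictly convex.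
-/

open Set

section

variable {𝕜 E F β : Type*} [Semiring 𝕜] [PartialOrder 𝕜] [AddCommMonoid E] [AddCommMonoid F]
  [AddCommMonoid β] [PartialOrder β] [IsOrderedCancelAddMonoid β]
  [Module 𝕜 E] [Module 𝕜 F] [Module 𝕜 β] {s : Set E} {t : Set F} {f : E → β} {g : F → β}

theorem StrictConcaveOn.add_prod (hf : StrictConcaveOn 𝕜 s f) (hg : StrictConcaveOn 𝕜 t g) :
    StrictConcaveOn 𝕜 (s ×ˢ t) fun p => f p.1 + g p.2 := by
  refine ⟨hf.1.prod hg.1, fun x hx y hy hxy a b ha hb hab => ?_⟩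
  rw [smul_add, smul_add, add_add_add_comm]
  rcases eq_or_ne x.1 y.1 with h1 | h1
  · have h2 : x.2 ≠ y.2 := fun h2 => hxy (Prod.ext h1 h2)
    exact add_lt_add_of_le_of_lt (hf.concaveOn.2 hx.1 hy.1 ha.le hb.le hab)
      (hg.2 hx.2 hy.2 h2 ha hb hab)
  · exact add_lt_add_of_lt_of_le (hf.2 hx.1 hy.1 h1 ha hb hab)
      (hg.concaveOn.2 hx.2 hy.2 ha.le hb.le hab)

end

theorem StrictConcaveOn.inv {𝕜 E : Type*} [Field 𝕜] [LinearOrder 𝕜] [IsStrictOrderedRing 𝕜]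
    [AddCommMonoid E] [Module 𝕜 E] {s : Set E} {f : E → 𝕜} (hf : StrictConcaveOn 𝕜 s f)
    (hf₀ : ∀ x ∈ s, 0 < f x) : StrictConvexOn 𝕜 s fun x => (f x)⁻¹ := by
  refine ⟨hf.1, fun x hx y hy hxy a b ha hb hab => ?_⟩
  have hmix : 0 < a • f x + b • f y := by
    have := hf₀ x hx
    have := hf₀ y hy
    simp only [smul_eq_mul]
    positivity
  have hlt := hf.2 hx hy hxy ha hb hab
  calc (f (a • x + b • y))⁻¹ < (a • f x + b • f y)⁻¹ := (inv_lt_inv₀ (hmix.trans hlt) hmix).2 hlt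
    _ ≤ a • (f x)⁻¹ + b • (f y)⁻¹ := by
      simpa only [zpow_neg_one] using
        (convexOn_zpow (𝕜 := 𝕜) (-1)).2 (hf₀ x hx) (hf₀ y hy) ha.le hb.le hab

theorem strictConcaveOn_div_one_add : StrictConcaveOn ℝ (Ici 0) fun x : ℝ => x / (1 + x) := by
  have h := ((strictConvexOn_zpow (m := -1) (by norm_num) (by norm_num)).translate_right
    (1 : ℝ)).subset (s := Ici 0) (fun x (hx : 0 ≤ x) => show (0 : ℝ) < 1 + x by linarith)
    (convex_Ici 0)
  refine (h.neg.add_const 1).congr fun x (hx : 0 ≤ x) => ?_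
  have : 1 + x ≠ 0 := by linarith
  simp only [Pi.add_apply, Pi.neg_apply, Function.comp_apply, zpow_neg_one]
  field_simp
  ring

theorem VL_eq_sub_inv {σ : ℝ} (hσ : σ ≠ 0) {n0 n1 : ℝ} (hn0 : 0 ≤ n0) (hn1 : 0 ≤ n1) :
    VL σ n0 n1 = σ ^ 2 - ((σ ^ 2)⁻¹ + (n0 / (1 + n0) + n1 / (1 + n1)))⁻¹ := by
  have h0 : 1 + n0 ≠ 0 := by linarith
  have h1 : 1 + n1 ≠ 0 := by linarith
  have hD : Dden σ n0 n1 ≠ 0 := by unfold Dden; positivity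
  unfold VL Dden at *
  field_simp
  ring

theorem strictConcaveOn_VL {σ : ℝ} (hσ : σ ≠ 0) :
    StrictConcaveOn ℝ (Ici 0 ×ˢ Ici 0) fun p : ℝ × ℝ => VL σ p.1 p.2 := by
  have hE := (strictConcaveOn_div_one_add.add_prod strictConcaveOn_div_one_add).add_const
    (σ ^ 2)⁻¹
  have hE₀ : ∀ p ∈ Ici (0 : ℝ) ×ˢ Ici (0 : ℝ),
      0 < p.1 / (1 + p.1) + p.2 / (1 + p.2) + (σ ^ 2)⁻¹ := by
    rintro ⟨x, y⟩ ⟨hx : 0 ≤ x, hy : 0 ≤ y⟩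
    have hx' : 0 ≤ x / (1 + x) := div_nonneg hx (by linarith)
    have hy' : 0 ≤ y / (1 + y) := div_nonneg hy (by linarith)
    have hσ' : 0 < (σ ^ 2)⁻¹ := by positivity
    linarith
  refine ((concaveOn_const (σ ^ 2) hE.1).sub_strictConvexOn (hE.inv hE₀)).congr ?_
  rintro ⟨x, y⟩ ⟨hx, hy⟩
  simp [VL_eq_sub_inv hσ hx hy, add_comm]

/-- `V_L` is strictly concave on `[0,∞) × [0,∞)`. -/
theorem stmt2 (σ : ℝ) (hσ : 0 < σ)
    (n0 n1 m0 m1 t : ℝ)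
    (hn0 : 0 ≤ n0) (hn1 : 0 ≤ n1) (hm0 : 0 ≤ m0) (hm1 : 0 ≤ m1)
    (hne : (n0, n1) ≠ (m0, m1)) (ht0 : 0 < t) (ht1 : t < 1) :
    t * VL σ n0 n1 + (1-t) * VL σ m0 m1 <
      VL σ (t*n0 + (1-t)*m0) (t*n1 + (1-t)*m1) := by
  simpa using (strictConcaveOn_VL hσ.ne').2 (x := (n0, n1)) (y := (m0, m1)) ⟨hn0, hn1⟩
    ⟨hm0, hm1⟩ hne ht0 (sub_pos.2 ht1) (add_sub_cancel t 1)
end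

section
/- For all x, y ≥ 0 one has the identity V_S(x,y) − V_S(y,x) = (y − x)·(2σ² + 1) / D(x,y); consequently V_S(x,y) > V_S(y,x) whenever y > x ≥ 0. -/
lemma Dden_pos_s5 (σ x y : ℝ) (hx : 0 ≤ x) (hy : 0 ≤ y) : 0 < Dden σ x y := by
  unfold Dden
  have h1 : 0 ≤ σ^2 * (x + y + 2*x*y) := by positivity
  nlinarith

lemma Dden_symm (σ x y : ℝ) : Dden σ x y = Dden σ y x := by unfold Dden; ring

lemma key (σ x y : ℝ) (hx : 0 ≤ x) (hy : 0 ≤ y) :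
    VS σ x y - VS σ y x = (y - x) * (2*σ^2 + 1) / Dden σ x y := by
  have hD := (Dden_pos_s5 σ x y hx hy).ne'
  unfold VS VL
  rw [Dden_symm σ y x]
  field_simp
  ring

/-- The identity `V_S(x,y) − V_S(y,x) = (y−x)(2σ²+1)/D(x,y)`, and the strict
inequality `V_S(x,y) > V_S(y,x)` for `y > x ≥ 0`. -/
theorem stmt5 (σ : ℝ) (hσ : 0 < σ) :
    (∀ x y : ℝ, 0 ≤ x → 0 ≤ y →
      VS σ x y - VS σ y x = (y - x) * (2*σ^2 + 1) / Dden σ x y) ∧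
    (∀ x y : ℝ, 0 ≤ x → x < y → VS σ y x < VS σ x y) := by
  constructor
  · exact fun x y hx hy => key σ x y hx hy
  · intro x y hx hxy
    have hy : 0 ≤ y := hx.trans hxy.le
    have h := key σ x y hx hy
    have hD := Dden_pos_s5 σ x y hx hy
    have : 0 < (y - x) * (2*σ^2 + 1) / Dden σ x y := by
      apply div_pos _ hD
      nlinarith
    linarith
end

section
/- Failure of single crossing: for every n0, n1 ≥ 0, ∂V_S/∂n1 (n0,n1) > ∂V_L/∂n1 (n0,n1); and for every n0 ≥ 0 and n1 > 0, ∂V_L/∂n0 (n0,n1) > ∂V_S/∂n0 (n0,n1), with equality of these two n0-partials when n1 = 0. -/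
lemma aff (A B x : ℝ) : HasDerivAt (fun y => A + B * y) B x := by
  simpa using ((hasDerivAt_id x).const_mul B).const_add A

lemma ratDeriv (A B C E x : ℝ) (h : A + B * x ≠ 0) :
    HasDerivAt (fun y => (C + E*y) / (A + B*y))
      ((E*(A+B*x) - (C+E*x)*B)/(A+B*x)^2) x :=
  (aff C E x).div (aff A B x) h

/-- Failure of single crossing: `∂V_S/∂n1 > ∂V_L/∂n1` everywhere on the
nonnegative quadrant; `∂V_L/∂n0 > ∂V_S/∂n0` when `n1 > 0`, with equality of
the two `n0`-partials when `n1 = 0`. -/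
theorem stmt8 (σ : ℝ) (hσ : 0 < σ) :
    (∀ n0 n1 : ℝ, 0 ≤ n0 → 0 ≤ n1 →
      deriv (fun y => VL σ n0 y) n1 < deriv (fun y => VS σ n0 y) n1) ∧
    (∀ n0 n1 : ℝ, 0 ≤ n0 → 0 < n1 →
      deriv (fun x => VS σ x n1) n0 < deriv (fun x => VL σ x n1) n0) ∧
    (∀ n0 : ℝ, 0 ≤ n0 →
      deriv (fun x => VL σ x 0) n0 = deriv (fun x => VS σ x 0) n0) := by
  have hσ2 : (0:ℝ) < σ^2 := by positivity
  refine ⟨?_, ?_, ?_⟩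
  · intro n0 n1 hn0 hn1
    set A := σ^2*n0 + (1+n0) with hA
    set B := σ^2*(1+2*n0) + (1+n0) with hB
    have hD : 0 < A + B * n1 := by
      rw [hA, hB]
      nlinarith [mul_nonneg hσ2.le hn0, mul_nonneg hσ2.le hn1, mul_nonneg hn0 hn1,
        mul_nonneg (mul_nonneg hσ2.le hn0) hn1]
    have hDne : A + B * n1 ≠ 0 := ne_of_gt hD
    have hVLeq : (fun y => VL σ n0 y) =
        fun y => (σ^4*n0 + (σ^4*(1+2*n0))*y) / (A + B*y) := by
      funext y; simp only [VL, Dden, hA, hB]; ring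
    have hgapeq : (fun y => VS σ n0 y) =
        fun y => VL σ n0 y + (0 + (3*σ^2*n0 + 2*σ^2 + 1 + n0)*y) / (A + B*y) := by
      funext y; simp only [VS, VL, Dden, hA, hB]; ring_nf
    have hVL : HasDerivAt (fun y => VL σ n0 y)
        ((σ^4*(1+2*n0)*(A+B*n1) - (σ^4*n0 + σ^4*(1+2*n0)*n1)*B)/(A+B*n1)^2) n1 := by
      rw [hVLeq]; exact ratDeriv A B _ _ n1 hDne
    have hg : HasDerivAt (fun y => (0 + (3*σ^2*n0 + 2*σ^2 + 1 + n0)*y) / (A + B*y))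
        (((3*σ^2*n0 + 2*σ^2 + 1 + n0)*(A+B*n1) -
          (0 + (3*σ^2*n0 + 2*σ^2 + 1 + n0)*n1)*B)/(A+B*n1)^2) n1 :=
      ratDeriv A B _ _ n1 hDne
    have hVS : HasDerivAt (fun y => VS σ n0 y)
        ((σ^4*(1+2*n0)*(A+B*n1) - (σ^4*n0 + σ^4*(1+2*n0)*n1)*B)/(A+B*n1)^2 +
         ((3*σ^2*n0 + 2*σ^2 + 1 + n0)*(A+B*n1) -
          (0 + (3*σ^2*n0 + 2*σ^2 + 1 + n0)*n1)*B)/(A+B*n1)^2) n1 := by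
      rw [hgapeq]; exact hVL.add hg
    rw [hVL.deriv, hVS.deriv]
    have hnum : 0 < ((3*σ^2*n0 + 2*σ^2 + 1 + n0)*(A+B*n1) -
          (0 + (3*σ^2*n0 + 2*σ^2 + 1 + n0)*n1)*B)/(A+B*n1)^2 := by
      apply div_pos _ (by positivity)
      have : (3*σ^2*n0 + 2*σ^2 + 1 + n0)*(A+B*n1) -
          (0 + (3*σ^2*n0 + 2*σ^2 + 1 + n0)*n1)*B
          = (3*σ^2*n0 + 2*σ^2 + 1 + n0) * A := by ring
      rw [this, hA]
      have h1 : 0 < 3*σ^2*n0 + 2*σ^2 + 1 + n0 := by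
        nlinarith [mul_nonneg hσ2.le hn0]
      have h2 : 0 < σ^2*n0 + (1+n0) := by
        nlinarith [mul_nonneg hσ2.le hn0]
      exact mul_pos h1 h2
    linarith
  · intro n0 n1 hn0 hn1
    set A := σ^2*n1 + (1+n1) with hA
    set B := σ^2*(1+2*n1) + (1+n1) with hB
    have hD : 0 < A + B * n0 := by
      rw [hA, hB]
      nlinarith [mul_nonneg hσ2.le hn0, mul_nonneg hσ2.le hn1.le, mul_nonneg hn0 hn1.le,
        mul_nonneg (mul_nonneg hσ2.le hn0) hn1.le]
    have hDne : A + B * n0 ≠ 0 := ne_of_gt hD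
    have hVLeq : (fun x => VL σ x n1) =
        fun x => (σ^4*n1 + (σ^4*(1+2*n1))*x) / (A + B*x) := by
      funext x; simp only [VL, Dden, hA, hB]; ring
    have hgapeq : (fun x => VS σ x n1) =
        fun x => VL σ x n1 +
          (n1*(2*σ^2+1) + (n1*(3*σ^2+1))*x) / (A + B*x) := by
      funext x; simp only [VS, VL, Dden, hA, hB]; ring_nf
    have hVL : HasDerivAt (fun x => VL σ x n1)
        ((σ^4*(1+2*n1)*(A+B*n0) - (σ^4*n1 + σ^4*(1+2*n1)*n0)*B)/(A+B*n0)^2) n0 := by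
      rw [hVLeq]; exact ratDeriv A B _ _ n0 hDne
    have hg : HasDerivAt (fun x => (n1*(2*σ^2+1) + (n1*(3*σ^2+1))*x) / (A + B*x))
        ((n1*(3*σ^2+1)*(A+B*n0) -
          (n1*(2*σ^2+1) + n1*(3*σ^2+1)*n0)*B)/(A+B*n0)^2) n0 :=
      ratDeriv A B _ _ n0 hDne
    have hVS : HasDerivAt (fun x => VS σ x n1)
        ((σ^4*(1+2*n1)*(A+B*n0) - (σ^4*n1 + σ^4*(1+2*n1)*n0)*B)/(A+B*n0)^2 +
         (n1*(3*σ^2+1)*(A+B*n0) -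
          (n1*(2*σ^2+1) + n1*(3*σ^2+1)*n0)*B)/(A+B*n0)^2) n0 := by
      rw [hgapeq]; exact hVL.add hg
    rw [hVL.deriv, hVS.deriv]
    have hnum : (n1*(3*σ^2+1)*(A+B*n0) -
          (n1*(2*σ^2+1) + n1*(3*σ^2+1)*n0)*B)/(A+B*n0)^2 < 0 := by
      apply div_neg_of_neg_of_pos _ (by positivity)
      have : n1*(3*σ^2+1)*(A+B*n0) - (n1*(2*σ^2+1) + n1*(3*σ^2+1)*n0)*B
          = n1*(3*σ^2+1)*A - n1*(2*σ^2+1)*B := by ring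
      rw [this, hA, hB]
      have hkey : n1*(3*σ^2+1)*(σ^2*n1 + (1+n1)) - n1*(2*σ^2+1)*(σ^2*(1+2*n1) + (1+n1))
          = -(n1 * σ^4 * (n1+2)) := by ring
      rw [hkey]
      have := mul_pos (mul_pos hn1 (pow_pos hσ 4)) (by linarith : (0:ℝ) < n1+2)
      linarith
    linarith
  · intro n0 hn0
    have : (fun x => VS σ x 0) = (fun x => VL σ x 0) := by
      funext x
      simp only [VS]
      rw [show (3*σ^2*x*0 + 2*σ^2*0 + 0 + x*0 : ℝ) = 0 by ring]
      simp
    rw [this]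
end

section
/- Comparative statics of the second-best historical sample in λ: let c > 0 and define E(n0, λ) = (1−λ)·σ⁴/( n0·σ² + n0 + 1 )² + c·σ⁴/( n0 + σ² + 2·n0·σ² + 1 )². If 0 < λ < λ' < 1, n0, n0' ≥ 0, E(n0, λ) = c and E(n0', λ') = c, then n0' < n0; moreover, the corresponding current-sample sizes n1 = √(λ/c) − (n0 + n0·σ² + 1)/(n0 + σ² + 2·n0·σ² + 1) and n1' = √(λ'/c) − (n0' + n0'·σ² + 1)/(n0' + σ² + 2·n0'·σ² + 1) satisfy n1' > n1. -/
/-- Comparative statics of the second-best historical sample in `λ`: the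
solution `n0` of `E(n0,λ)=c` decreases in `λ`, and the induced `n1` increases. -/
theorem stmt15 (σ c : ℝ) (hσ : 0 < σ) (hc : 0 < c)
    (lam lam' n0 n0' : ℝ)
    (hl0 : 0 < lam) (hll : lam < lam') (hl1 : lam' < 1)
    (hn0 : 0 ≤ n0) (hn0' : 0 ≤ n0')
    (hE : (1-lam) * σ^4 / (n0*σ^2 + n0 + 1)^2
        + c * σ^4 / (n0 + σ^2 + 2*n0*σ^2 + 1)^2 = c)
    (hE' : (1-lam') * σ^4 / (n0'*σ^2 + n0' + 1)^2
        + c * σ^4 / (n0' + σ^2 + 2*n0'*σ^2 + 1)^2 = c) :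
    n0' < n0 ∧
    Real.sqrt (lam/c) - (n0 + n0*σ^2 + 1) / (n0 + σ^2 + 2*n0*σ^2 + 1) <
      Real.sqrt (lam'/c) - (n0' + n0'*σ^2 + 1) / (n0' + σ^2 + 2*n0'*σ^2 + 1) := by
  have hσ2 : 0 < σ^2 := by positivity
  have hσ4 : 0 < σ^4 := by positivity
  have hA : 0 < n0*σ^2 + n0 + 1 := by nlinarith
  have hA' : 0 < n0'*σ^2 + n0' + 1 := by nlinarith
  have hB : 0 < n0 + σ^2 + 2*n0*σ^2 + 1 := by nlinarith
  have hB' : 0 < n0' + σ^2 + 2*n0'*σ^2 + 1 := by nlinarith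
  have hmain : n0' < n0 := by
    by_contra h
    push_neg at h
    -- n0 ≤ n0', so F(n0',λ') ≤ F(n0,λ') < F(n0,λ) = c, contradiction
    have h1 : (1-lam') * σ^4 / (n0'*σ^2 + n0' + 1)^2
        ≤ (1-lam') * σ^4 / (n0*σ^2 + n0 + 1)^2 := by
      apply div_le_div_of_nonneg_left (by nlinarith) (by positivity)
      exact pow_le_pow_left₀ (le_of_lt hA) (by nlinarith) 2
    have h2 : c * σ^4 / (n0' + σ^2 + 2*n0'*σ^2 + 1)^2
        ≤ c * σ^4 / (n0 + σ^2 + 2*n0*σ^2 + 1)^2 := by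
      apply div_le_div_of_nonneg_left (by positivity) (by positivity)
      exact pow_le_pow_left₀ (le_of_lt hB) (by nlinarith) 2
    have h3 : (1-lam') * σ^4 / (n0*σ^2 + n0 + 1)^2
        < (1-lam) * σ^4 / (n0*σ^2 + n0 + 1)^2 := by
      exact div_lt_div_of_pos_right (by nlinarith) (by positivity)
    linarith
  refine ⟨hmain, ?_⟩
  have hs : Real.sqrt (lam/c) < Real.sqrt (lam'/c) := by
    apply Real.sqrt_lt_sqrt (by positivity)
    exact div_lt_div_of_pos_right hll hc
  have hg : (n0' + n0'*σ^2 + 1) / (n0' + σ^2 + 2*n0'*σ^2 + 1)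
      < (n0 + n0*σ^2 + 1) / (n0 + σ^2 + 2*n0*σ^2 + 1) := by
    rw [div_lt_div_iff₀ hB' hB]
    nlinarith [sq_nonneg σ, mul_pos hσ2 hσ2]
  linarith
end

section
/- Bang-bang access for broad types (alternative typology): let 0 < r < s < 1/2, p_r ∈ (0, 1/2), σ > 0, c > 0, and set K_r = r² + (1−r)² and K_s = s² + (1−s)². Define H(N,Q) = ( (1/2)·K_s − p_r·K_r )·Q/(Q+σ²) + p_r·K_r·N/(N+σ²) − 2·c·N on the set S = {(N,Q) ∈ ℝ² : 0 ≤ Q ≤ N}. Then: (a) if 2·p_r < K_s/K_r, every maximizer (N,Q) of H on S satisfies Q = N; (b) if 2·p_r > K_s/K_r, every maximizer (N,Q) of H on S satisfies Q = 0. -/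
/-- Bang-bang access for broad types in the alternative typology: maximizers of
the reduced objective `H` on `{0 ≤ Q ≤ N}` give broad types full access when
`2 p_r < K_s/K_r` and no access when `2 p_r > K_s/K_r`. -/
theorem stmt18 (r s pr σ c : ℝ)
    (hr : 0 < r) (hrs : r < s) (hs : s < 1/2)
    (hpr0 : 0 < pr) (hpr1 : pr < 1/2) (hσ : 0 < σ) (hc : 0 < c)
    (N Q : ℝ) (hQ0 : 0 ≤ Q) (hQN : Q ≤ N)
    (hmax : ∀ N' Q' : ℝ, 0 ≤ Q' → Q' ≤ N' →
      ((1/2) * (s^2 + (1-s)^2) - pr * (r^2 + (1-r)^2)) * (Q' / (Q' + σ^2))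
          + pr * (r^2 + (1-r)^2) * (N' / (N' + σ^2)) - 2*c*N' ≤
      ((1/2) * (s^2 + (1-s)^2) - pr * (r^2 + (1-r)^2)) * (Q / (Q + σ^2))
          + pr * (r^2 + (1-r)^2) * (N / (N + σ^2)) - 2*c*N) :
    (2*pr < (s^2 + (1-s)^2) / (r^2 + (1-r)^2) → Q = N) ∧
    (2*pr > (s^2 + (1-s)^2) / (r^2 + (1-r)^2) → Q = 0) := by
  have hσ2 : 0 < σ^2 := by positivity
  have hKr : 0 < r^2 + (1-r)^2 := by positivity
  have hQσ : 0 < Q + σ^2 := by linarith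
  have hNσ : 0 < N + σ^2 := by linarith
  have hN0 : (0:ℝ) ≤ N := le_trans hQ0 hQN
  constructor
  · intro h
    have hA : 0 < (1/2) * (s^2 + (1-s)^2) - pr * (r^2 + (1-r)^2) := by
      rw [lt_div_iff₀ hKr] at h
      nlinarith
    have h1 := hmax N N hN0 le_rfl
    have h2 : Q / (Q + σ^2) ≤ N / (N + σ^2) := by
      rw [div_le_div_iff₀ hQσ hNσ]
      nlinarith
    have h3 : N / (N + σ^2) ≤ Q / (Q + σ^2) := by nlinarith
    have h4 : Q / (Q + σ^2) = N / (N + σ^2) := le_antisymm h2 h3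
    rw [div_eq_div_iff hQσ.ne' hNσ.ne'] at h4
    have h5 : Q * σ^2 = N * σ^2 := by linear_combination h4
    exact mul_right_cancel₀ hσ2.ne' h5
  · intro h
    have hA : (1/2) * (s^2 + (1-s)^2) - pr * (r^2 + (1-r)^2) < 0 := by
      rw [gt_iff_lt, div_lt_iff₀ hKr] at h
      nlinarith
    have h1 := hmax N 0 le_rfl hN0
    have hQdiv : 0 ≤ Q / (Q + σ^2) := by positivity
    simp only [zero_div, mul_zero, zero_add] at h1
    have hx : 0 ≤ ((1/2) * (s^2 + (1-s)^2) - pr * (r^2 + (1-r)^2)) * (Q / (Q + σ^2)) := by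
      linarith
    have hx2 : ((1/2) * (s^2 + (1-s)^2) - pr * (r^2 + (1-r)^2)) * (Q / (Q + σ^2)) ≤ 0 :=
      mul_nonpos_of_nonpos_of_nonneg hA.le hQdiv
    have hx3 : ((1/2) * (s^2 + (1-s)^2) - pr * (r^2 + (1-r)^2)) * (Q / (Q + σ^2)) = 0 :=
      le_antisymm hx2 hx
    have hx4 : Q / (Q + σ^2) = 0 := (mul_eq_zero.mp hx3).resolve_left hA.ne
    rcases div_eq_zero_iff.mp hx4 with h | h
    · exact h
    · exact absurd h hQσ.ne'
end
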